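/- arXiv:2602.11404 — 14 statements merged into one kernel-verified Lean document; each statement's English description precedes it below -/
import Mathlib

section
/- For every real number z with 0 ≤ z ≤ 1 and every real number k ≥ 1, it holds that 1 - (1-z)^k ≥ k·z·(1-z)^k. -/
theorem stmt_0 (z k : ℝ) (hz0 : 0 ≤ z) (hz1 : z ≤ 1) (hk : 1 ≤ k) :
    1 - (1 - z) ^ k ≥ k * z * (1 - z) ^ k := by
  set t : ℝ := 1 - z with ht
  have ht0 : 0 ≤ t := by linarith
  have ht1 : t ≤ 1 := by linarith
  rcases eq_or_lt_of_le ht0 with h | h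
  · have : t ^ k = 0 := by
      rw [← h]; exact Real.zero_rpow (by linarith)
    rw [this]; simp
  · -- t > 0
    have hs : -1 ≤ z / t := le_trans (by norm_num) (div_nonneg hz0 ht0)
    have hb := one_add_mul_self_le_rpow_one_add hs hk
    have h1 : (1 + z / t) = 1 / t := by field_simp; linarith
    rw [h1] at hb
    have h2 : (1 / t) ^ k = 1 / t ^ k := by
      rw [Real.div_rpow (by norm_num) ht0, Real.one_rpow]
    rw [h2] at hb
    have hpow : 0 < t ^ k := Real.rpow_pos_of_pos h k
    have h3 : (1 + k * (z / t)) * t ^ k ≤ 1 := by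
      calc (1 + k * (z / t)) * t ^ k ≤ (1 / t ^ k) * t ^ k :=
            mul_le_mul_of_nonneg_right hb hpow.le
        _ = 1 := by field_simp
    have h4 : (1 + k * (z / t)) * t ^ k = t ^ k + k * z * t ^ k * (1 / t) := by
      field_simp
    have h5 : k * z * t ^ k ≤ k * z * t ^ k * (1 / t) := by
      have hnn : 0 ≤ k * z * t ^ k := by positivity
      have hd : (1:ℝ) ≤ 1 / t := by rw [le_div_iff₀ h]; linarith
      nlinarith [mul_le_mul_of_nonneg_left hd hnn]
    nlinarith
end

section
/- For every integer n ≥ 1, it holds that 1 - (1 - (1/n)·(1 - (1 - 1/n²)^n))^n ≥ (1/n)·(1 - 2/n). -/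
lemma key_aux (n : ℕ) (x : ℝ) (h0 : 0 ≤ x) (h1 : x ≤ 1) :
    (n : ℝ) * x / (1 + n * x) ≤ 1 - (1 - x) ^ n := by
  have hpos : (0 : ℝ) < 1 + n * x := by positivity
  have hb : (1 : ℝ) + n * x ≤ (1 + x) ^ n := by
    have := one_add_mul_le_pow (a := x) (by linarith) n
    linarith
  have h2 : (1 - x) ^ n * (1 + n * x) ≤ 1 := by
    calc (1 - x) ^ n * (1 + n * x) ≤ (1 - x) ^ n * (1 + x) ^ n := by
          apply mul_le_mul_of_nonneg_left hb (pow_nonneg (by linarith) n)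
      _ = (1 - x ^ 2) ^ n := by rw [← mul_pow]; ring_nf
      _ ≤ 1 := by
          apply pow_le_one₀ (by nlinarith) (by nlinarith)
  have h3 : (1 - x) ^ n ≤ 1 / (1 + n * x) := by
    rw [le_div_iff₀ hpos]; exact h2
  have h4 : 1 - 1 / (1 + n * x) = (n : ℝ) * x / (1 + n * x) := by
    field_simp
    ring
  linarith [h3, h4.symm ▸ (le_refl (1 - 1 / (1 + (n:ℝ) * x)))]

lemma mono_aux (a b : ℝ) (ha : 0 ≤ a) (hab : a ≤ b) :
    a / (1 + a) ≤ b / (1 + b) := by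
  have h1 : (0:ℝ) < 1 + a := by linarith
  have h2 : (0:ℝ) < 1 + b := by linarith
  rw [div_le_div_iff₀ h1 h2]
  nlinarith

theorem stmt_1 (n : ℕ) (hn : 1 ≤ n) :
    1 - (1 - (1 / (n : ℝ)) * (1 - (1 - 1 / (n : ℝ) ^ 2) ^ n)) ^ n
      ≥ (1 / (n : ℝ)) * (1 - 2 / (n : ℝ)) := by
  have hN : (1 : ℝ) ≤ n := by exact_mod_cast hn
  have hN0 : (0 : ℝ) < n := by linarith
  set N : ℝ := (n : ℝ) with hNdef
  -- first application with x = 1/N²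
  have hx0 : (0 : ℝ) ≤ 1 / N ^ 2 := by positivity
  have hx1 : 1 / N ^ 2 ≤ 1 := by
    rw [div_le_one (by positivity)]; nlinarith
  have k1 := key_aux n (1 / N ^ 2) hx0 hx1
  have hs : N * (1 / N ^ 2) = 1 / N := by field_simp
  rw [hs] at k1
  -- so 1 - q ≥ (1/N)/(1 + 1/N) = 1/(N+1)
  have h1q : 1 / (N + 1) ≤ 1 - (1 - 1 / N ^ 2) ^ n := by
    have : (1 / N) / (1 + 1 / N) = 1 / (N + 1) := by
      field_simp
    linarith [this ▸ k1]
  set p : ℝ := (1 / N) * (1 - (1 - 1 / N ^ 2) ^ n) with hpdef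
  have hq0 : (0 : ℝ) ≤ (1 - 1 / N ^ 2) ^ n := pow_nonneg (by linarith [hx1]) n
  have hq1 : (1 - 1 / N ^ 2) ^ n ≤ 1 := pow_le_one₀ (by linarith) (by nlinarith)
  have hp0 : 0 ≤ p := by
    apply mul_nonneg (one_div_nonneg.mpr hN0.le); linarith
  have hp1 : p ≤ 1 := by
    have h1n : 1 / N ≤ 1 := by rw [div_le_one hN0]; linarith
    have : p ≤ (1 / N) * 1 := by
      apply mul_le_mul_of_nonneg_left (by linarith) (by positivity)
    linarith
  have k2 := key_aux n p hp0 hp1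
  have hNp : 1 / (N + 1) ≤ N * p := by
    have : N * p = 1 - (1 - 1 / N ^ 2) ^ n := by
      rw [hpdef]; field_simp
    linarith
  have hmono := mono_aux (1 / (N + 1)) (N * p) (by positivity) hNp
  have hsimp : (1 / (N + 1)) / (1 + 1 / (N + 1)) = 1 / (N + 2) := by
    have : (0:ℝ) < N + 1 := by linarith
    field_simp
    ring
  rw [hsimp] at hmono
  have hfin : (1 / N) * (1 - 2 / N) ≤ 1 / (N + 2) := by
    have e : 1 / (N + 2) - (1 / N) * (1 - 2 / N) = 4 / (N ^ 2 * (N + 2)) := by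
      have h1 : N ≠ 0 := ne_of_gt hN0
      have h2 : N + 2 ≠ 0 := by positivity
      field_simp
      ring
    nlinarith [e, div_nonneg (by norm_num : (0:ℝ) ≤ 4) (le_of_lt (by positivity : (0:ℝ) < N ^ 2 * (N + 2)))]
  linarith [k2, hmono, hfin]
end

section
/- For every integer n ≥ 1, it holds that 1 - (1 - 1/n²)^n - (1/n)·(1 - 1/n²)^{n-1} ≤ 1/n². -/
theorem stmt_2 (n : ℕ) (hn : 1 ≤ n) :
    1 - (1 - 1 / (n : ℝ) ^ 2) ^ n - (1 / (n : ℝ)) * (1 - 1 / (n : ℝ) ^ 2) ^ (n - 1)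
      ≤ 1 / (n : ℝ) ^ 2 := by
  have hx : (1 : ℝ) ≤ (n : ℝ) := by exact_mod_cast hn
  have hx0 : (0 : ℝ) < (n : ℝ) := lt_of_lt_of_le one_pos hx
  set a : ℝ := 1 / (n : ℝ) with ha_def
  have ha0 : 0 < a := by positivity
  have hna : (n : ℝ) * a = 1 := by rw [ha_def]; field_simp
  have ea : (1 : ℝ) / (n : ℝ) ^ 2 = a ^ 2 := by rw [ha_def, div_pow, one_pow]
  have ha2 : a ^ 2 ≤ 1 := by nlinarith
  have hb : (-2 : ℝ) ≤ -(a ^ 2) := by nlinarith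
  have h1 := one_add_mul_le_pow hb n
  have h2 := one_add_mul_le_pow hb (n - 1)
  have hcast : ((n - 1 : ℕ) : ℝ) = (n : ℝ) - 1 := by
    have := Nat.cast_sub hn (R := ℝ); simpa using this
  rw [hcast] at h2
  have e1 : (n : ℝ) * -(a ^ 2) = -a := by linear_combination (-a) * hna
  have e2 : ((n : ℝ) - 1) * -(a ^ 2) = -(a - a ^ 2) := by linear_combination (-a) * hna
  rw [e1] at h1
  rw [e2] at h2
  rw [show (1 : ℝ) + -(a ^ 2) = 1 - a ^ 2 from by ring] at h1 h2
  rw [ea]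
  have h2a := mul_le_mul_of_nonneg_left h2 ha0.le
  nlinarith [pow_pos ha0 3, h1, h2a]
end

section
/- Let (Ω, P) be a probability space and let X₁, ..., X_k be independent random variables on Ω, each taking values in {0,1}, with P(X_j = 1) = p_j for each j. Then E[1/(1 + ∑_{j=1}^k X_j)] = ∫₀¹ ∏_{j=1}^k (1 - p_j·(1 - z)) dz. -/
open MeasureTheory ProbabilityTheory

lemma aux_ptwise {k : ℕ} (x : Fin k → ℝ) (hx : ∀ j, x j = 0 ∨ x j = 1) :
    ∫ z in (0:ℝ)..1, ∏ j, (1 - x j * (1 - z)) = 1 / (1 + ∑ j, x j) := by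
  classical
  set s := Finset.univ.filter (fun j => x j = 1) with hs
  have hsum : ∑ j, x j = (s.card : ℝ) := by
    have : ∑ j, x j = ∑ j ∈ s, (1:ℝ) := by
      rw [Finset.sum_filter]
      refine Finset.sum_congr rfl fun j _ => ?_
      rcases hx j with h | h <;> simp [h]
    rw [this]; simp
  have hprod : ∀ z : ℝ, ∏ j, (1 - x j * (1 - z)) = z ^ s.card := by
    intro z
    rw [← Finset.prod_filter_mul_prod_filter_not Finset.univ (fun j => x j = 1)]
    have h1 : ∏ j ∈ s, (1 - x j * (1 - z)) = z ^ s.card := by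
      rw [← Finset.prod_const]
      refine Finset.prod_congr rfl fun j hj => ?_
      have := (Finset.mem_filter.mp hj).2
      rw [this]; ring
    have h2 : ∏ j ∈ Finset.univ.filter (fun j => ¬ x j = 1), (1 - x j * (1 - z)) = 1 := by
      refine Finset.prod_eq_one fun j hj => ?_
      have h := (Finset.mem_filter.mp hj).2
      rcases hx j with h0 | h1
      · rw [h0]; ring
      · exact absurd h1 h
    rw [h1, h2, mul_one]
  simp only [hprod]
  rw [integral_pow, hsum]
  simp
  rw [add_comm]

lemma aux_prod_int {Ω : Type*} [MeasurableSpace Ω] (P : Measure Ω) [IsProbabilityMeasure P]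
    {k : ℕ} (Y : Fin k → Ω → ℝ) (hY : iIndepFun Y P)
    (hm : ∀ j, Measurable (Y j)) (s : Finset (Fin k)) :
    ∫ ω, ∏ j ∈ s, Y j ω ∂P = ∏ j ∈ s, ∫ ω, Y j ω ∂P := by
  classical
  induction s using Finset.induction_on with
  | empty => simp
  | insert i s hi ih =>
    rw [Finset.prod_insert hi]
    have hind : IndepFun (fun ω => ∏ j ∈ s, Y j ω) (Y i) P := by
      have h := hY.indepFun_finsetProd_of_notMem hm hi
      have he : (∏ j ∈ s, Y j) = fun ω => ∏ j ∈ s, Y j ω := by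
        funext ω; simp [Finset.prod_apply]
      rwa [he] at h
    have h1 : ∫ ω, Y i ω * ∏ j ∈ s, Y j ω ∂P
        = (∫ ω, Y i ω ∂P) * ∫ ω, ∏ j ∈ s, Y j ω ∂P := by
      have := hind.symm.integral_mul_eq_mul_integral (hm i).aestronglyMeasurable
        (Finset.measurable_prod s (fun j _ => hm j)).aestronglyMeasurable
      simpa using this
    simp_rw [Finset.prod_insert hi]
    rw [h1, ih]

open MeasureTheory ProbabilityTheory

theorem stmt_4 {Ω : Type*} [MeasurableSpace Ω] (P : Measure Ω) [IsProbabilityMeasure P]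
    (k : ℕ) (X : Fin k → Ω → ℝ) (p : Fin k → ℝ)
    (hmeas : ∀ j, Measurable (X j))
    (hindep : iIndepFun X P)
    (hval : ∀ j ω, X j ω = 0 ∨ X j ω = 1)
    (hp : ∀ j, (P {ω | X j ω = 1}).toReal = p j) :
    ∫ ω, 1 / (1 + ∑ j, X j ω) ∂P
      = ∫ z in (0 : ℝ)..1, ∏ j, (1 - p j * (1 - z)) := by
  classical
  -- rewrite pointwise
  have step1 : ∫ ω, 1 / (1 + ∑ j, X j ω) ∂P
      = ∫ ω, (∫ z in Set.Ioc (0:ℝ) 1, ∏ j, (1 - X j ω * (1 - z))) ∂P := by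
    refine integral_congr_ae (ae_of_all _ fun ω => ?_)
    show 1 / (1 + ∑ j, X j ω) = _
    rw [← aux_ptwise (fun j => X j ω) (fun j => hval j ω),
      intervalIntegral.integral_of_le (by norm_num : (0:ℝ) ≤ 1)]
  rw [step1]
  -- Fubini
  have hFmeas : Measurable (fun q : Ω × ℝ => ∏ j, (1 - X j q.1 * (1 - q.2))) := by
    exact Finset.measurable_prod _ fun j _ =>
      (measurable_const.sub (((hmeas j).comp measurable_fst).mul
        (measurable_const.sub measurable_snd)))
  have hInt : Integrable (Function.uncurry fun (ω : Ω) (z : ℝ) => ∏ j, (1 - X j ω * (1 - z)))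
      (P.prod (volume.restrict (Set.Ioc (0:ℝ) 1))) := by
    have hbound : ∀ᵐ q ∂(P.prod (volume.restrict (Set.Ioc (0:ℝ) 1))),
        ‖∏ j, (1 - X j q.1 * (1 - q.2))‖ ≤ 1 := by
      have hae : ∀ᵐ q ∂(P.prod (volume.restrict (Set.Ioc (0:ℝ) 1))),
          q.2 ∈ Set.Ioc (0:ℝ) 1 := by
        rw [← Measure.restrict_univ (μ := P), Measure.prod_restrict]
        filter_upwards [ae_restrict_mem (MeasurableSet.univ.prod measurableSet_Ioc)] with q hq
        exact hq.2
      filter_upwards [hae] with q hq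
      rw [Real.norm_eq_abs, Finset.abs_prod]
      refine Finset.prod_le_one (fun j _ => abs_nonneg _) (fun j _ => ?_)
      rcases hval j q.1 with h | h
      · simp [h]
      · rw [h]; rw [show (1:ℝ) - 1 * (1 - q.2) = q.2 by ring, abs_of_pos hq.1]
        exact hq.2
    exact (integrable_const (1:ℝ)).mono' hFmeas.aestronglyMeasurable hbound
  rw [integral_integral_swap hInt]
  rw [intervalIntegral.integral_of_le (by norm_num : (0:ℝ) ≤ 1)]
  refine setIntegral_congr_fun measurableSet_Ioc fun z _ => ?_
  -- for fixed z : expectation of product = product of expectations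
  have hcomp : iIndepFun
      (fun j ω => 1 - X j ω * (1 - z)) P := by
    exact hindep.comp (fun j (x : ℝ) => 1 - x * (1 - z))
      (fun j => measurable_const.sub (measurable_id.mul measurable_const))
  have := aux_prod_int P (fun j ω => 1 - X j ω * (1 - z)) hcomp
    (fun j => measurable_const.sub ((hmeas j).mul measurable_const)) Finset.univ
  rw [this]
  refine Finset.prod_congr rfl fun j _ => ?_
  -- single expectation
  have hset : MeasurableSet {ω | X j ω = 1} := hmeas j (measurableSet_singleton 1)
  have hXind : X j = Set.indicator {ω | X j ω = 1} (fun _ => (1:ℝ)) := by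
    funext ω
    rcases hval j ω with h | h
    · rw [h, Set.indicator_of_notMem]
      intro hmem
      rw [Set.mem_setOf_eq, h] at hmem; norm_num at hmem
    · rw [h]; exact (Set.indicator_of_mem h (fun _ => (1:ℝ))).symm
  have hXint : Integrable (X j) P := by
    rw [hXind]
    exact (integrable_const 1).indicator hset
  have hEX : ∫ ω, X j ω ∂P = p j := by
    rw [hXind, integral_indicator_const _ hset, smul_eq_mul, mul_one]; exact hp j
  rw [integral_sub (integrable_const 1) (hXint.mul_const _), integral_const,
    integral_mul_const, hEX]
  simp
end

section
/- Let m ≥ 1 be an integer, let S be a finite index set, and for each j ∈ S let b_j be an integer with 1 ≤ b_j ≤ m, and set p_j = 1 - (b_j - 1)/(3m). Then ∫₀¹ ∏_{j ∈ S} (1 - (b_j·p_j/m)·y) dy ≥ ∫₀¹ (1 - y/m)^{∑_{j ∈ S} b_j} dy. -/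
open Set intervalIntegral

/-- Predicate: continuous, nonneg on [0,1], antitone on [0,1]. -/
def RSgood (G : ℝ → ℝ) : Prop :=
  Continuous G ∧ (∀ y ∈ Icc (0:ℝ) 1, 0 ≤ G y) ∧ AntitoneOn G (Icc (0:ℝ) 1)

lemma RSgood.mul {f g : ℝ → ℝ} (hf : RSgood f) (hg : RSgood g) :
    RSgood (fun y => f y * g y) := by
  obtain ⟨hfc, hf0, hfa⟩ := hf
  obtain ⟨hgc, hg0, hga⟩ := hg
  refine ⟨hfc.mul hgc, fun y hy => mul_nonneg (hf0 y hy) (hg0 y hy), ?_⟩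
  intro x hx y hy hxy
  exact mul_le_mul (hfa hx hy hxy) (hga hx hy hxy) (hg0 y hy) (hf0 x hx)

lemma RSgood.one : RSgood (fun _ : ℝ => (1:ℝ)) :=
  ⟨continuous_const, fun _ _ => zero_le_one, fun _ _ _ _ _ => le_rfl⟩

lemma RSgood_affine {a : ℝ} (h0 : 0 ≤ a) (h1 : a ≤ 1) :
    RSgood (fun y => 1 - a * y) := by
  refine ⟨by continuity, fun y hy => ?_, fun x hx y hy hxy => ?_⟩
  · have h2 : a * y ≤ 1 := by nlinarith [hy.1, hy.2]
    simp only []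
    linarith
  · have h2 : a * x ≤ a * y := by nlinarith
    simp only []
    linarith

lemma integral_poly (c d : ℝ) :
    (∫ y in (0:ℝ)..1, y * (c - d * y)) = c / 2 - d / 3 := by
  have h : ∀ y : ℝ, y * (c - d * y) = c * y ^ 1 - d * y ^ 2 := by intro y; ring
  simp_rw [h]
  rw [intervalIntegral.integral_sub ((by fun_prop : Continuous fun y : ℝ => c * y ^ 1).intervalIntegrable _ _)
      ((by fun_prop : Continuous fun y : ℝ => d * y ^ 2).intervalIntegrable _ _),
    intervalIntegral.integral_const_mul, intervalIntegral.integral_const_mul,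
    integral_pow, integral_pow]
  ring

lemma key_sign (c d : ℝ) (hc : 0 ≤ c) (hd : 0 ≤ d) (hcd : d / 3 ≤ c / 2)
    (G : ℝ → ℝ) (hG : RSgood G) :
    0 ≤ ∫ y in (0:ℝ)..1, y * (c - d * y) * G y := by
  obtain ⟨hGc, hG0, hGa⟩ := hG
  rcases eq_or_lt_of_le hd with hd0 | hd0
  · -- d = 0 : integrand nonneg
    refine intervalIntegral.integral_nonneg zero_le_one fun y hy => ?_
    have : 0 ≤ c - d * y := by nlinarith [hy.1]
    exact mul_nonneg (mul_nonneg hy.1 this) (hG0 y hy)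
  · set t : ℝ := min (c / d) 1 with ht
    have htmem : t ∈ Icc (0:ℝ) 1 :=
      ⟨le_min (div_nonneg hc hd) zero_le_one, min_le_right _ _⟩
    have hGt : 0 ≤ G t := hG0 t htmem
    have hpt : ∀ y ∈ Icc (0:ℝ) 1, y * (c - d * y) * G t ≤ y * (c - d * y) * G y := by
      intro y hy
      rcases le_or_gt y t with hyt | hyt
      · have h1 : 0 ≤ c - d * y := by
          have : d * y ≤ d * t := by nlinarith
          have : d * t ≤ c := by
            have := min_le_left (c / d) 1
            calc d * t ≤ d * (c / d) := by nlinarith [le_min (div_nonneg hc hd) zero_le_one]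
            _ = c := by field_simp
          linarith
        have h2 : G t ≤ G y := hGa hy htmem hyt
        have h3 : 0 ≤ y * (c - d * y) := mul_nonneg hy.1 h1
        exact mul_le_mul_of_nonneg_left h2 h3
      · have htlt : t < 1 := lt_of_lt_of_le hyt hy.2
        have htcd : t = c / d := by
          rcases min_cases (c / d) 1 with ⟨h, _⟩ | ⟨h, h'⟩
          · exact h
          · exfalso; rw [ht, h] at htlt; exact lt_irrefl _ htlt
        have h1 : c - d * y ≤ 0 := by
          have : c = d * t := by rw [htcd]; field_simp
          nlinarith
        have h2 : G y ≤ G t := hGa htmem hy hyt.le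
        have h3 : y * (c - d * y) ≤ 0 := mul_nonpos_of_nonneg_of_nonpos (le_trans htmem.1 hyt.le) h1
        nlinarith
    have hi1 : IntervalIntegrable (fun y : ℝ => y * (c - d * y) * G t) MeasureTheory.volume 0 1 :=
      (by fun_prop : Continuous fun y : ℝ => y * (c - d * y) * G t).intervalIntegrable _ _
    have hi2 : IntervalIntegrable (fun y : ℝ => y * (c - d * y) * G y) MeasureTheory.volume 0 1 :=
      (by fun_prop : Continuous fun y : ℝ => y * (c - d * y) * G y).intervalIntegrable _ _
    have h4 : (∫ y in (0:ℝ)..1, y * (c - d * y) * G t) ≤ ∫ y in (0:ℝ)..1, y * (c - d * y) * G y :=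
      intervalIntegral.integral_mono_on zero_le_one hi1 hi2 hpt
    have h5 : (∫ y in (0:ℝ)..1, y * (c - d * y) * G t) = (c / 2 - d / 3) * G t := by
      rw [intervalIntegral.integral_mul_const, integral_poly]
    have h6 : 0 ≤ (c / 2 - d / 3) * G t := mul_nonneg (by linarith) hGt
    linarith [h4, h5 ▸ h6]

lemma factor_lemma (m : ℕ) (hm : 1 ≤ m) (b : ℕ) (hb1 : 1 ≤ b) :
    ∀ _ : b ≤ m, ∀ G : ℝ → ℝ, RSgood G →
    (∫ y in (0:ℝ)..1, (1 - y / m) ^ b * G y)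
      ≤ ∫ y in (0:ℝ)..1, (1 - ((b:ℝ) * (1 - ((b:ℝ) - 1) / (3 * m)) / m) * y) * G y := by
  have hmR : (0:ℝ) < m := by exact_mod_cast hm
  induction b, hb1 using Nat.le_induction with
  | base =>
    intro _ G hG
    have he : ∀ y : ℝ, (1 - y / m) ^ 1 * G y
        = (1 - (((1:ℕ):ℝ) * (1 - (((1:ℕ):ℝ) - 1) / (3 * m)) / m) * y) * G y := by
      intro y; push_cast; rw [pow_one]; ring_nf
    exact le_of_eq (intervalIntegral.integral_congr fun y _ => he y)
  | succ n hn IH =>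
    intro hbm G hG
    have hnm : n ≤ m := le_trans (Nat.le_succ n) hbm
    have hnR : (1:ℝ) ≤ n := by exact_mod_cast hn
    have hn1m : (n:ℝ) + 1 ≤ m := by exact_mod_cast hbm
    -- the good function  (1 - y/m) * G y
    have hlin : RSgood (fun y : ℝ => 1 - y / m) := by
      have h := RSgood_affine (a := 1 / (m:ℝ)) (by positivity)
        (by rw [div_le_one hmR]; exact_mod_cast hm)
      have : (fun y : ℝ => 1 - (1 / (m:ℝ)) * y) = fun y : ℝ => 1 - y / m := by
        funext y; ring
      rwa [this] at h
    have hG' : RSgood (fun y : ℝ => (1 - y / m) * G y) := hlin.mul hG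
    -- step 1: rewrite the LHS
    have e1 : (∫ y in (0:ℝ)..1, (1 - y / m) ^ (n + 1) * G y)
        = ∫ y in (0:ℝ)..1, (1 - y / m) ^ n * ((1 - y / m) * G y) := by
      refine intervalIntegral.integral_congr fun y _ => ?_
      rw [pow_succ]; ring
    -- step 2: IH applied to G'
    have e2 : (∫ y in (0:ℝ)..1, (1 - y / m) ^ n * ((1 - y / m) * G y))
        ≤ ∫ y in (0:ℝ)..1, (1 - ((n:ℝ) * (1 - ((n:ℝ) - 1) / (3 * m)) / m) * y)
            * ((1 - y / m) * G y) := IH hnm _ hG'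
    -- step 3: the merging inequality via key_sign
    set A : ℝ := (n:ℝ) * (1 - ((n:ℝ) - 1) / (3 * m)) / m with hA
    set A' : ℝ := ((n + 1 : ℕ):ℝ) * (1 - (((n + 1 : ℕ):ℝ) - 1) / (3 * m)) / m with hA'
    set c : ℝ := 2 * (n:ℝ) / (3 * (m:ℝ)^2) with hc
    set d : ℝ := A / m with hd
    have hcnn : 0 ≤ c := by positivity
    have hdval : d = (n:ℝ) * (3 * (m:ℝ) - ((n:ℝ) - 1)) / (3 * (m:ℝ)^3) := by
      rw [hd, hA]; field_simp
    have hdnn : 0 ≤ d := by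
      rw [hdval]
      apply div_nonneg _ (by positivity)
      apply mul_nonneg (by positivity)
      nlinarith
    have hcd : d / 3 ≤ c / 2 := by
      have hdiff : c / 2 - d / 3 = (n:ℝ) * ((n:ℝ) - 1) / (9 * (m:ℝ)^3) := by
        rw [hc, hd, hA]; field_simp; ring_nf
      have : 0 ≤ (n:ℝ) * ((n:ℝ) - 1) / (9 * (m:ℝ)^3) := by
        apply div_nonneg _ (by positivity)
        apply mul_nonneg (by positivity)
        linarith
      linarith
    have hks := key_sign c d hcnn hdnn hcd G hG
    have hid : ∀ y : ℝ, (1 - A' * y) * G y - (1 - A * y) * ((1 - y / m) * G y)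
        = y * (c - d * y) * G y := by
      intro y
      have h0 : (1 - A' * y) - (1 - A * y) * (1 - y / m) = y * (c - d * y) := by
        rw [hA', hA, hc, hd, hA]; push_cast; field_simp; ring
      linear_combination (G y) * h0
    have hi1 : IntervalIntegrable
        (fun y : ℝ => (1 - A' * y) * G y) MeasureTheory.volume 0 1 :=
      ((by fun_prop : Continuous fun y : ℝ => 1 - A' * y).mul hG.1).intervalIntegrable _ _
    have hi2 : IntervalIntegrable
        (fun y : ℝ => (1 - A * y) * ((1 - y / m) * G y)) MeasureTheory.volume 0 1 :=
      ((by fun_prop : Continuous fun y : ℝ => 1 - A * y).mul hG'.1).intervalIntegrable _ _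
    have e3 : (∫ y in (0:ℝ)..1, (1 - A * y) * ((1 - y / m) * G y))
        ≤ ∫ y in (0:ℝ)..1, (1 - A' * y) * G y := by
      have hsub : (∫ y in (0:ℝ)..1, (1 - A' * y) * G y)
          - (∫ y in (0:ℝ)..1, (1 - A * y) * ((1 - y / m) * G y))
          = ∫ y in (0:ℝ)..1, y * (c - d * y) * G y := by
        rw [← intervalIntegral.integral_sub hi1 hi2]
        exact intervalIntegral.integral_congr fun y _ => hid y
      linarith [hsub ▸ hks]
    calc (∫ y in (0:ℝ)..1, (1 - y / m) ^ (n + 1) * G y)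
        = ∫ y in (0:ℝ)..1, (1 - y / m) ^ n * ((1 - y / m) * G y) := e1
      _ ≤ ∫ y in (0:ℝ)..1, (1 - A * y) * ((1 - y / m) * G y) := e2
      _ ≤ ∫ y in (0:ℝ)..1, (1 - A' * y) * G y := e3

lemma RSgood_lin (m : ℕ) (hm : 1 ≤ m) : RSgood (fun y : ℝ => 1 - y / m) := by
  have hmR : (0:ℝ) < m := by exact_mod_cast hm
  have h := RSgood_affine (a := 1 / (m:ℝ)) (by positivity)
    (by rw [div_le_one hmR]; exact_mod_cast hm)
  have : (fun y : ℝ => 1 - (1 / (m:ℝ)) * y) = fun y : ℝ => 1 - y / m := by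
    funext y; ring
  rwa [this] at h

lemma RSgood_pow (m : ℕ) (hm : 1 ≤ m) (k : ℕ) :
    RSgood (fun y : ℝ => (1 - y / m) ^ k) := by
  induction k with
  | zero => simpa using RSgood.one
  | succ n IH =>
    have h := (RSgood_lin m hm).mul IH
    have : (fun y : ℝ => (1 - y / m) * (1 - y / m) ^ n)
        = fun y : ℝ => (1 - y / m) ^ (n + 1) := by
      funext y; rw [pow_succ]; ring
    rwa [this] at h

lemma RSgood_factor (m bj : ℕ) (hm : 1 ≤ m) (h1 : 1 ≤ bj) (h2 : bj ≤ m) :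
    RSgood (fun y : ℝ => 1 - ((bj:ℝ) * (1 - ((bj:ℝ) - 1) / (3 * m)) / m) * y) := by
  have hmR : (0:ℝ) < m := by exact_mod_cast hm
  have hbR : (1:ℝ) ≤ bj := by exact_mod_cast h1
  have hbm : (bj:ℝ) ≤ m := by exact_mod_cast h2
  have e1 : 0 ≤ ((bj:ℝ) - 1) / (3 * m) := div_nonneg (by linarith) (by positivity)
  have e2 : ((bj:ℝ) - 1) / (3 * m) ≤ 1 := by
    rw [div_le_one (by positivity)]; nlinarith
  refine RSgood_affine ?_ ?_
  · apply div_nonneg (mul_nonneg (by linarith) (by linarith)) (le_of_lt hmR)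
  · rw [div_le_one hmR]; nlinarith

lemma RSgood_prod {ι : Type*} (s : Finset ι) (f : ι → ℝ → ℝ)
    (h : ∀ j ∈ s, RSgood (f j)) : RSgood (fun y => ∏ j ∈ s, f j y) := by
  classical
  induction s using Finset.induction_on with
  | empty => simpa using RSgood.one
  | @insert a s ha IH =>
    have h1 : RSgood (f a) := h a (Finset.mem_insert_self a s)
    have h2 : RSgood (fun y => ∏ j ∈ s, f j y) :=
      IH fun j hj => h j (Finset.mem_insert_of_mem hj)
    have h3 := h1.mul h2
    have : (fun y => f a y * ∏ j ∈ s, f j y) = fun y => ∏ j ∈ insert a s, f j y := by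
      funext y; rw [Finset.prod_insert ha]
    rwa [this] at h3

lemma main_aux {ι : Type*} (m : ℕ) (hm : 1 ≤ m) (S : Finset ι) (b : ι → ℕ) :
    ∀ _ : (∀ j ∈ S, 1 ≤ b j ∧ b j ≤ m), ∀ k : ℕ,
    (∫ y in (0:ℝ)..1, (1 - y / m) ^ (k + ∑ j ∈ S, b j))
      ≤ ∫ y in (0:ℝ)..1,
          (∏ j ∈ S, (1 - ((b j : ℝ) * (1 - ((b j : ℝ) - 1) / (3 * m)) / m) * y))
            * (1 - y / m) ^ k := by
  classical
  induction S using Finset.induction_on with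
  | empty =>
    intro _ k
    refine le_of_eq (intervalIntegral.integral_congr fun y _ => ?_)
    simp
  | @insert a s ha IH =>
    intro hb k
    have hba := hb a (Finset.mem_insert_self a s)
    have hbs : ∀ j ∈ s, 1 ≤ b j ∧ b j ≤ m := fun j hj => hb j (Finset.mem_insert_of_mem hj)
    have h1 := IH hbs (k + b a)
    -- rewrite the LHS exponent
    have eexp : k + ∑ j ∈ insert a s, b j = (k + b a) + ∑ j ∈ s, b j := by
      rw [Finset.sum_insert ha]; omega
    -- G is good
    have hGgood : RSgood (fun y : ℝ =>
        (∏ j ∈ s, (1 - ((b j : ℝ) * (1 - ((b j : ℝ) - 1) / (3 * m)) / m) * y))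
          * (1 - y / m) ^ k) := by
      exact (RSgood_prod s _ fun j hj =>
        RSgood_factor m (b j) hm (hbs j hj).1 (hbs j hj).2).mul (RSgood_pow m hm k)
    have h2 := factor_lemma m hm (b a) hba.1 hba.2 _ hGgood
    calc (∫ y in (0:ℝ)..1, (1 - y / m) ^ (k + ∑ j ∈ insert a s, b j))
        = ∫ y in (0:ℝ)..1, (1 - y / m) ^ ((k + b a) + ∑ j ∈ s, b j) := by rw [eexp]
      _ ≤ ∫ y in (0:ℝ)..1,
            (∏ j ∈ s, (1 - ((b j : ℝ) * (1 - ((b j : ℝ) - 1) / (3 * m)) / m) * y))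
              * (1 - y / m) ^ (k + b a) := h1
      _ = ∫ y in (0:ℝ)..1, (1 - y / m) ^ (b a) *
            ((∏ j ∈ s, (1 - ((b j : ℝ) * (1 - ((b j : ℝ) - 1) / (3 * m)) / m) * y))
              * (1 - y / m) ^ k) := by
          refine intervalIntegral.integral_congr fun y _ => ?_
          rw [pow_add]; ring
      _ ≤ ∫ y in (0:ℝ)..1,
            (1 - ((b a : ℝ) * (1 - ((b a : ℝ) - 1) / (3 * m)) / m) * y) *
            ((∏ j ∈ s, (1 - ((b j : ℝ) * (1 - ((b j : ℝ) - 1) / (3 * m)) / m) * y))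
              * (1 - y / m) ^ k) := h2
      _ = ∫ y in (0:ℝ)..1,
            (∏ j ∈ insert a s, (1 - ((b j : ℝ) * (1 - ((b j : ℝ) - 1) / (3 * m)) / m) * y))
              * (1 - y / m) ^ k := by
          refine intervalIntegral.integral_congr fun y _ => ?_
          rw [Finset.prod_insert ha]; ring

theorem stmt_5 {ι : Type*} (m : ℕ) (hm : 1 ≤ m) (S : Finset ι) (b : ι → ℕ)
    (hb : ∀ j ∈ S, 1 ≤ b j ∧ b j ≤ m) :
    ∫ y in (0 : ℝ)..1,
        ∏ j ∈ S, (1 - ((b j : ℝ) * (1 - ((b j : ℝ) - 1) / (3 * m)) / m) * y)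
      ≥ ∫ y in (0 : ℝ)..1, (1 - y / m) ^ (∑ j ∈ S, b j) := by
  have h := main_aux m hm S b hb 0
  rw [ge_iff_le]
  calc (∫ y in (0:ℝ)..1, (1 - y / m) ^ (∑ j ∈ S, b j))
      = ∫ y in (0:ℝ)..1, (1 - y / m) ^ (0 + ∑ j ∈ S, b j) := by rw [Nat.zero_add]
    _ ≤ ∫ y in (0:ℝ)..1,
          (∏ j ∈ S, (1 - ((b j : ℝ) * (1 - ((b j : ℝ) - 1) / (3 * m)) / m) * y))
            * (1 - y / m) ^ 0 := h
    _ = ∫ y in (0:ℝ)..1,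
          ∏ j ∈ S, (1 - ((b j : ℝ) * (1 - ((b j : ℝ) - 1) / (3 * m)) / m) * y) := by
        refine intervalIntegral.integral_congr fun y _ => ?_
        rw [pow_zero, mul_one]
end

section
/- Let m and b be integers with 2 ≤ b ≤ m, set p = 1 - (b - 1)/(3m), and define f(y) = 1 - (b·p/m)·y - (1 - y/m)^b for real y. Then there exists y₀ ∈ [0,1] such that f(y) ≥ 0 for all y ∈ [0, y₀] and f(y) ≤ 0 for all y ∈ [y₀, 1]. -/
lemma cubic_bound (b : ℕ) (x : ℝ) (hx0 : 0 ≤ x) (hx1 : x ≤ 1) :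
    1 - (b:ℝ)*x + ((b:ℝ)*((b:ℝ)-1)/2)*x^2 - ((b:ℝ)*((b:ℝ)-1)*((b:ℝ)-2)/6)*x^3 ≤ (1-x)^b := by
  induction b with
  | zero => norm_num
  | succ n ih =>
      have h1x : (0:ℝ) ≤ 1 - x := by linarith
      have h1 : (1-x) * (1 - (n:ℝ)*x + ((n:ℝ)*((n:ℝ)-1)/2)*x^2 - ((n:ℝ)*((n:ℝ)-1)*((n:ℝ)-2)/6)*x^3)
          ≤ (1-x)^(n+1) := by
        rw [pow_succ]
        calc (1-x) * (1 - (n:ℝ)*x + ((n:ℝ)*((n:ℝ)-1)/2)*x^2 - ((n:ℝ)*((n:ℝ)-1)*((n:ℝ)-2)/6)*x^3)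
            ≤ (1-x) * (1-x)^n := mul_le_mul_of_nonneg_left ih h1x
          _ = (1-x)^n * (1-x) := by ring
      have hB : 0 ≤ (n:ℝ)*((n:ℝ)-1)*((n:ℝ)-2) := by
        match n with
        | 0 => norm_num
        | 1 => norm_num
        | (k+2) =>
            have hk : (0:ℝ) ≤ (k:ℝ) := Nat.cast_nonneg k
            push_cast
            nlinarith [hk, mul_nonneg (mul_nonneg hk (by linarith : (0:ℝ) ≤ (k:ℝ)+1)) (by linarith : (0:ℝ) ≤ (k:ℝ)+2)]
      push_cast
      nlinarith [h1, mul_nonneg hB (pow_nonneg hx0 4)]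

theorem stmt_6 (m b : ℕ) (hb : 2 ≤ b) (hbm : b ≤ m) :
    ∃ y₀ ∈ Set.Icc (0 : ℝ) 1,
      (∀ y ∈ Set.Icc (0 : ℝ) y₀,
          1 - ((b : ℝ) * (1 - ((b : ℝ) - 1) / (3 * m)) / m) * y - (1 - y / m) ^ b ≥ 0) ∧
      (∀ y ∈ Set.Icc y₀ (1 : ℝ),
          1 - ((b : ℝ) * (1 - ((b : ℝ) - 1) / (3 * m)) / m) * y - (1 - y / m) ^ b ≤ 0) := by
  set f : ℝ → ℝ := fun y => 1 - ((b : ℝ) * (1 - ((b : ℝ) - 1) / (3 * m)) / m) * y - (1 - y / m) ^ b with hfdef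
  have hB2 : (2:ℝ) ≤ (b:ℝ) := by exact_mod_cast hb
  have hBM : (b:ℝ) ≤ (m:ℝ) := by exact_mod_cast hbm
  have hM2 : (2:ℝ) ≤ (m:ℝ) := le_trans hB2 hBM
  have hM0 : (0:ℝ) < (m:ℝ) := by linarith
  -- f 1 ≤ 0
  have hf1 : f 1 ≤ 0 := by
    have key := cubic_bound b (1/(m:ℝ)) (by positivity) (by rw [div_le_one hM0]; linarith)
    have h3 : ((b:ℝ)-2)*(1/(m:ℝ)) ≤ 1 := by
      rw [mul_one_div, div_le_one hM0]; linarith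
    have h4 : (0:ℝ) ≤ (b:ℝ)*((b:ℝ)-1) := by nlinarith
    have main : 0 ≤ (b:ℝ)*((b:ℝ)-1)*(1/(m:ℝ))^2*(1-((b:ℝ)-2)*(1/(m:ℝ))) :=
      mul_nonneg (mul_nonneg h4 (by positivity)) (by linarith)
    have hcomp : ((b:ℝ) * (1 - ((b:ℝ) - 1) / (3 * m)) / m) * 1
        = (b:ℝ)*(1/(m:ℝ)) - ((b:ℝ)*((b:ℝ)-1)/3)*(1/(m:ℝ))^2 := by
      field_simp
    simp only [hfdef]
    linarith [key, main, hcomp]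
  -- continuity
  have hcont : Continuous f := by
    apply Continuous.sub
    · exact (continuous_const.sub (continuous_const.mul continuous_id))
    · exact ((continuous_const.sub (continuous_id.div_const _)).pow b)
  -- concavity on Icc 0 1
  have hconc : ConcaveOn ℝ (Set.Icc (0:ℝ) 1) f := by
    refine ⟨convex_Icc _ _, ?_⟩
    intro x hx y hy a c ha hc hac
    have hx1 : (0:ℝ) ≤ 1 - x / m := by
      rw [sub_nonneg, div_le_one hM0]; exact le_trans hx.2 (by linarith)
    have hy1 : (0:ℝ) ≤ 1 - y / m := by
      rw [sub_nonneg, div_le_one hM0]; exact le_trans hy.2 (by linarith)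
    have hpow := (convexOn_pow b).2 (Set.mem_Ici.mpr hx1) (Set.mem_Ici.mpr hy1) ha hc hac
    simp only [smul_eq_mul] at hpow ⊢
    have hkey : a * (1 - x/(m:ℝ)) + c * (1 - y/(m:ℝ)) = 1 - (a*x + c*y)/(m:ℝ) := by
      linear_combination hac
    rw [hkey] at hpow
    simp only [hfdef]
    linarith [hpow, hac]
  -- the set S of points in [0,1] where f is nonnegative
  set S : Set ℝ := {y ∈ Set.Icc (0:ℝ) 1 | 0 ≤ f y} with hSdef
  have h0S : (0:ℝ) ∈ S := by
    refine ⟨⟨le_refl 0, zero_le_one⟩, ?_⟩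
    simp [hfdef]
  have hSne : S.Nonempty := ⟨0, h0S⟩
  have hSbdd : BddAbove S := ⟨1, fun z hz => hz.1.2⟩
  have hSclosed : IsClosed S := by
    have hEq : S = Set.Icc (0:ℝ) 1 ∩ {y | 0 ≤ f y} := rfl
    rw [hEq]
    exact isClosed_Icc.inter (isClosed_le continuous_const hcont)
  have hSconv : Convex ℝ S := hconc.convex_ge 0
  set y₀ : ℝ := sSup S with hy₀def
  have hy₀S : y₀ ∈ S := hSclosed.csSup_mem hSne hSbdd
  refine ⟨y₀, hy₀S.1, ?_, ?_⟩
  · intro y hy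
    have hyS : y ∈ S := hSconv.ordConnected.out h0S hy₀S hy
    exact hyS.2
  · intro y hy
    by_contra hcon
    push_neg at hcon
    have hyIcc : y ∈ Set.Icc (0:ℝ) 1 := ⟨le_trans hy₀S.1.1 hy.1, hy.2⟩
    have hyS : y ∈ S := ⟨hyIcc, le_of_lt hcon⟩
    have hle : y ≤ y₀ := le_csSup hSbdd hyS
    have heq : y = y₀ := le_antisymm hle hy.1
    rcases eq_or_lt_of_le hy₀S.1.2 with h1 | h1
    · -- y₀ = 1
      have : (0:ℝ) < f 1 := by rw [← h1, ← heq]; exact hcon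
      linarith
    · -- y₀ < 1
      have hU : {z | 0 < f z} ∈ nhds y₀ := by
        apply (isOpen_lt continuous_const hcont).mem_nhds
        rw [← heq]; exact hcon
      have hI : Set.Iio (1:ℝ) ∈ nhds y₀ := Iio_mem_nhds h1
      have hmem : {z | 0 < f z} ∩ Set.Iio 1 ∈ nhdsWithin y₀ (Set.Ioi y₀) :=
        mem_nhdsWithin_of_mem_nhds (Filter.inter_mem hU hI)
      have hne : (nhdsWithin y₀ (Set.Ioi y₀)).NeBot := nhdsGT_neBot y₀
      obtain ⟨z, hz1, hz2⟩ := Filter.nonempty_of_mem (Filter.inter_mem hmem self_mem_nhdsWithin)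
      have hz0 : (0:ℝ) ≤ z := le_trans hy₀S.1.1 (le_of_lt hz2)
      have hzS : z ∈ S := ⟨⟨hz0, le_of_lt hz1.2⟩, le_of_lt hz1.1⟩
      have : z ≤ y₀ := le_csSup hSbdd hzS
      exact absurd hz2 (not_lt.mpr this)
end

section
/- Let m and b be integers with 1 ≤ b ≤ m and set p = 1 - (b - 1)/(3m). Then ∫₀¹ (1 - (b·p/m)·y - (1 - y/m)^b) dy ≥ 0; equivalently, ∫₀¹ (1 - y/m)^b dy ≤ 1 - (b·p)/(2m). -/
lemma bern_cube (n : ℕ) (x : ℝ) (hx0 : 0 ≤ x) (hx1 : x ≤ 1) :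
    1 - (n : ℝ) * x + ((n : ℝ) * ((n : ℝ) - 1) / 2) * x ^ 2
      - ((n : ℝ) * ((n : ℝ) - 1) * ((n : ℝ) - 2) / 6) * x ^ 3 ≤ (1 - x) ^ n := by
  induction n with
  | zero => norm_num
  | succ n ih =>
      have h1x : (0 : ℝ) ≤ 1 - x := by linarith
      have hmul := mul_le_mul_of_nonneg_left ih h1x
      have hc3 : (0 : ℝ) ≤ (n : ℝ) * ((n : ℝ) - 1) * ((n : ℝ) - 2) / 6 := by
        match n with
        | 0 => norm_num
        | 1 => norm_num
        | 2 => norm_num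
        | (k + 3) =>
          have hk : (0:ℝ) ≤ (k:ℝ) := Nat.cast_nonneg k
          push_cast
          nlinarith [mul_nonneg (mul_nonneg hk hk) hk, mul_nonneg hk hk]
      have hx4 : (0 : ℝ) ≤ ((n : ℝ) * ((n : ℝ) - 1) * ((n : ℝ) - 2) / 6) * x ^ 4 :=
        mul_nonneg hc3 (by positivity)
      have hpow : (1 - x) ^ (n + 1) = (1 - x) * (1 - x) ^ n := by ring
      push_cast
      rw [hpow]
      nlinarith [hmul, hx4]

theorem stmt_7 (m b : ℕ) (hb : 1 ≤ b) (hbm : b ≤ m) :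
    (∫ y in (0 : ℝ)..1,
        (1 - ((b : ℝ) * (1 - ((b : ℝ) - 1) / (3 * m)) / m) * y - (1 - y / m) ^ b)) ≥ 0 ∧
    (∫ y in (0 : ℝ)..1, (1 - y / m) ^ b)
      ≤ 1 - (b : ℝ) * (1 - ((b : ℝ) - 1) / (3 * m)) / (2 * m) := by
  have hm : (1 : ℝ) ≤ (m : ℝ) := by exact_mod_cast le_trans hb hbm
  have hM0 : (0 : ℝ) < (m : ℝ) := by linarith
  have hMne : (m : ℝ) ≠ 0 := ne_of_gt hM0
  have hB0 : (0 : ℝ) < (b : ℝ) + 1 := by positivity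
  have hBne : (b : ℝ) + 1 ≠ 0 := ne_of_gt hB0
  set M : ℝ := (m : ℝ) with hMdef
  set c : ℝ := (b : ℝ) * (1 - ((b : ℝ) - 1) / (3 * M)) / M with hcdef
  -- integral of (1 - y/M)^b
  have hI : (∫ y in (0 : ℝ)..1, (1 - y / M) ^ b)
      = M / ((b : ℝ) + 1) * (1 - (1 - 1 / M) ^ (b + 1)) := by
    have hderiv : ∀ y ∈ Set.uIcc (0 : ℝ) 1,
        HasDerivAt (fun z : ℝ => -(M / ((b : ℝ) + 1)) * (1 - z / M) ^ (b + 1))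
          ((1 - y / M) ^ b) y := by
      intro y _
      have h1 : HasDerivAt (fun z : ℝ => 1 - z / M) (-(1 / M)) y := by
        simpa using ((hasDerivAt_id y).div_const M).const_sub 1
      have h2 := (h1.pow (b + 1)).const_mul (-(M / ((b : ℝ) + 1)))
      refine h2.congr_deriv ?_
      push_cast
      field_simp
    have hcont : IntervalIntegrable (fun y : ℝ => (1 - y / M) ^ b)
        MeasureTheory.volume (0 : ℝ) 1 := by
      apply Continuous.intervalIntegrable
      continuity
    have := intervalIntegral.integral_eq_sub_of_hasDerivAt hderiv hcont
    rw [this]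
    have h0 : (1 : ℝ) - 0 / M = 1 := by ring
    rw [h0]
    ring
  -- value of the linear part
  have hlin : (∫ y in (0 : ℝ)..1, (1 - c * y)) = 1 - c / 2 := by
    rw [intervalIntegral.integral_sub intervalIntegrable_const
        ((intervalIntegral.intervalIntegrable_id).const_mul c),
      intervalIntegral.integral_const_mul, integral_id, intervalIntegral.integral_const]
    norm_num
    ring
  have hsplit : (∫ y in (0 : ℝ)..1, (1 - c * y - (1 - y / M) ^ b))
      = (1 - c / 2) - M / ((b : ℝ) + 1) * (1 - (1 - 1 / M) ^ (b + 1)) := by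
    rw [intervalIntegral.integral_sub, hlin, hI]
    · exact (intervalIntegrable_const.sub
        ((intervalIntegral.intervalIntegrable_id).const_mul c))
    · apply Continuous.intervalIntegrable; continuity
  -- the binomial bound
  have hx0 : (0 : ℝ) ≤ 1 / M := by positivity
  have hx1 : 1 / M ≤ 1 := by
    rw [div_le_one hM0]; exact hm
  have hbern := bern_cube (b + 1) (1 / M) hx0 hx1
  push_cast at hbern
  set q : ℝ := (1 - 1 / M) ^ (b + 1) with hqdef
  set S : ℝ := 1 - ((b : ℝ) + 1) * (1 / M)
      + (((b : ℝ) + 1) * (((b : ℝ) + 1) - 1) / 2) * (1 / M) ^ 2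
      - (((b : ℝ) + 1) * (((b : ℝ) + 1) - 1) * (((b : ℝ) + 1) - 2) / 6) * (1 / M) ^ 3
    with hSdef
  have hqS : S ≤ q := hbern
  -- key algebraic identity: the slack is exactly (M/(b+1)) * (q - S)
  have hkey : (1 - c / 2) - M / ((b : ℝ) + 1) * (1 - q)
      = M / ((b : ℝ) + 1) * (q - S) := by
    rw [hSdef, hcdef]
    field_simp
    ring
  have hpos : (0 : ℝ) ≤ M / ((b : ℝ) + 1) * (q - S) :=
    mul_nonneg (by positivity) (by linarith)
  constructor
  · rw [hsplit, hkey] at *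
    linarith
  · have : M / ((b : ℝ) + 1) * (1 - q) ≤ 1 - c / 2 := by linarith [hkey ▸ hpos]
    have hc2 : (b : ℝ) * (1 - ((b : ℝ) - 1) / (3 * M)) / (2 * M) = c / 2 := by
      rw [hcdef]; ring
    rw [hI, hc2]
    linarith
end

section
/- For every real z with 0 ≤ z < 1, the function g_z(x) = (1 - x/3)·(1 - exp(-1 + x + z)) / (1 - x - z) is nondecreasing on the interval [0, 1 - z). -/
open Real Set

-- Lemma A: 1 - E + s*E ≥ 0 for s ≤ 0, E = exp s
lemma auxA (s : ℝ) : 0 ≤ 1 - Real.exp s + s * Real.exp s := by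
  have h1 : -s + 1 ≤ Real.exp (-s) := Real.add_one_le_exp (-s)
  have h2 : Real.exp (-s) * Real.exp s = 1 := by
    rw [← Real.exp_add]; simp
  have hE : 0 < Real.exp s := Real.exp_pos s
  nlinarith [mul_le_mul_of_nonneg_right h1 hE.le]

-- Lemma B: 2(1 - E) + s(2 - s)E ≥ 0 for s ≤ 0
lemma auxB (s : ℝ) (hs : s ≤ 0) : 0 ≤ 2 * (1 - Real.exp s) + s * (2 - s) * Real.exp s := by
  have h1 : 1 + (-s) + (-s) ^ 2 / 2 ≤ Real.exp (-s) :=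
    Real.quadratic_le_exp_of_nonneg (by linarith)
  have h2 : Real.exp (-s) * Real.exp s = 1 := by
    rw [← Real.exp_add]; simp
  have hE : 0 < Real.exp s := Real.exp_pos s
  nlinarith [mul_le_mul_of_nonneg_right h1 hE.le]

theorem stmt_9 (z : ℝ) (hz0 : 0 ≤ z) (hz1 : z < 1) :
    MonotoneOn (fun x : ℝ => (1 - x / 3) * (1 - Real.exp (-1 + x + z)) / (1 - x - z))
      (Set.Ico 0 (1 - z)) := by
  have hint : interior (Set.Ico (0:ℝ) (1 - z)) = Set.Ioo 0 (1 - z) := interior_Ico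
  have hne : ∀ x ∈ Set.Ico (0:ℝ) (1 - z), 1 - x - z ≠ 0 := by
    intro x hx
    have := hx.2
    simp only [Set.mem_Ico] at hx
    have : x < 1 - z := hx.2
    linarith [hx.1]
  -- derivative
  have hderiv : ∀ x ∈ Set.Ioo (0:ℝ) (1 - z),
      HasDerivAt (fun x : ℝ => (1 - x / 3) * (1 - Real.exp (-1 + x + z)) / (1 - x - z))
        ((((-1/3) * (1 - Real.exp (-1 + x + z)) + (1 - x / 3) * (-Real.exp (-1 + x + z)))
          * (1 - x - z) - (1 - x / 3) * (1 - Real.exp (-1 + x + z)) * (-1)) / (1 - x - z) ^ 2)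
        x := by
    intro x hx
    have hw : 1 - x - z ≠ 0 := by
      rcases hx with ⟨h1, h2⟩; intro h; linarith
    have hu : HasDerivAt (fun x : ℝ => 1 - x / 3) (-1/3) x := by
      have := ((hasDerivAt_id x).div_const 3).const_sub 1
      rw [show (-1/3:ℝ) = -(1/3) by norm_num]
      exact this
    have he : HasDerivAt (fun x : ℝ => Real.exp (-1 + x + z)) (Real.exp (-1 + x + z)) x := by
      have h0 : HasDerivAt (fun x : ℝ => -1 + x + z) 1 x := by
        simpa using ((hasDerivAt_id x).const_add (-1)).add_const z
      simpa [Function.comp_def] using (Real.hasDerivAt_exp (-1 + x + z)).comp x h0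
    have hv : HasDerivAt (fun x : ℝ => 1 - Real.exp (-1 + x + z))
        (-Real.exp (-1 + x + z)) x := by
      simpa using he.const_sub 1
    have hw' : HasDerivAt (fun x : ℝ => 1 - x - z) (-1) x := by
      have := ((hasDerivAt_id x).const_sub 1).sub_const z
      simpa using this
    exact (hu.mul hv).div hw' hw
  apply monotoneOn_of_deriv_nonneg (convex_Ico _ _)
  · -- continuity
    apply ContinuousOn.div
    · exact (continuous_const.sub (continuous_id.div_const 3)).continuousOn.mul
        (continuous_const.sub ((continuous_const.add continuous_id).add
          continuous_const).rexp).continuousOn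
    · exact ((continuous_const.sub continuous_id).sub continuous_const).continuousOn
    · exact hne
  · rw [hint]
    intro x hx
    exact (hderiv x hx).differentiableAt.differentiableWithinAt
  · rw [hint]
    intro x hx
    rw [(hderiv x hx).deriv]
    have hw : 0 < 1 - x - z := by rcases hx with ⟨h1, h2⟩; linarith
    apply div_nonneg _ (sq_nonneg _)
    obtain ⟨s, hs⟩ : ∃ s : ℝ, -1 + x + z = s := ⟨_, rfl⟩
    have hsle : s ≤ 0 := by rcases hx with ⟨h1, h2⟩; linarith
    have hA := auxA s
    have hB := auxB s hsle
    have hzA : 0 ≤ z * (1 - Real.exp s + s * Real.exp s) := mul_nonneg hz0 hA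
    have hxeq : x = s + 1 - z := by linarith
    rw [hs, hxeq]
    nlinarith [hB, hzA]
end

section
/- Let m and b be integers with 1 ≤ b ≤ m. Then (1 - (b-1)/(3m)) · (m/(m - b + 1)) · (1 - exp(-1 + (b-1)/m)) ≥ 1 - 1/e. -/
open Real Set

lemma aux_key : ∀ x ∈ Set.Icc (0:ℝ) 1,
    Real.exp x * (3 - x) ≤ 3 + (2 * Real.exp 1 - 3) * x := by
  have hconc : ConcaveOn ℝ (Set.Icc (0:ℝ) 1)
      (fun x => 3 + (2 * Real.exp 1 - 3) * x - Real.exp x * (3 - x)) := by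
    apply concaveOn_of_hasDerivWithinAt2_nonpos (f' := fun x => (2 * Real.exp 1 - 3) - Real.exp x * (2 - x))
      (f'' := fun x => - (Real.exp x * (1 - x))) (convex_Icc 0 1)
    · fun_prop
    · intro x hx
      have h : HasDerivAt (fun x => 3 + (2 * Real.exp 1 - 3) * x - Real.exp x * (3 - x))
          ((2 * Real.exp 1 - 3) - Real.exp x * (2 - x)) x := by
        have h1 : HasDerivAt (fun x : ℝ => Real.exp x * (3 - x))
            (Real.exp x * (3 - x) + Real.exp x * (-1)) x :=
          (Real.hasDerivAt_exp x).mul ((hasDerivAt_id x).const_sub 3)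
        have h2 : HasDerivAt (fun x : ℝ => 3 + (2 * Real.exp 1 - 3) * x)
            (2 * Real.exp 1 - 3) x := by
          simpa using ((hasDerivAt_id x).const_mul (2 * Real.exp 1 - 3)).const_add 3
        have := h2.sub h1
        refine this.congr_deriv ?_
        ring
      exact h.hasDerivWithinAt
    · intro x hx
      have h1 : HasDerivAt (fun x : ℝ => Real.exp x * (2 - x))
          (Real.exp x * (2 - x) + Real.exp x * (-1)) x :=
        (Real.hasDerivAt_exp x).mul ((hasDerivAt_id x).const_sub 2)
      have h : HasDerivAt (fun x => (2 * Real.exp 1 - 3) - Real.exp x * (2 - x))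
          (- (Real.exp x * (1 - x))) x := by
        have := h1.const_sub (2 * Real.exp 1 - 3)
        refine this.congr_deriv ?_
        ring
      exact h.hasDerivWithinAt
    · intro x hx
      rw [interior_Icc] at hx
      have := Real.exp_pos x
      nlinarith [hx.1, hx.2]
  intro x hx
  have h0 : (fun x => 3 + (2 * Real.exp 1 - 3) * x - Real.exp x * (3 - x)) 0 = 0 := by
    simp
  have h1 : (fun x => 3 + (2 * Real.exp 1 - 3) * x - Real.exp x * (3 - x)) 1 = 0 := by
    simp; ring
  have := hconc.2 (Set.left_mem_Icc.2 zero_le_one) (Set.right_mem_Icc.2 zero_le_one)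
    (sub_nonneg.2 hx.2) hx.1 (by ring)
  rw [h0, h1] at this
  simp only [smul_eq_mul, mul_zero, mul_one, zero_add] at this
  linarith

theorem stmt_10 (m b : ℕ) (hb : 1 ≤ b) (hbm : b ≤ m) :
    (1 - ((b : ℝ) - 1) / (3 * m)) * ((m : ℝ) / ((m : ℝ) - b + 1))
        * (1 - Real.exp (-1 + ((b : ℝ) - 1) / m))
      ≥ 1 - 1 / Real.exp 1 := by
  have hm : (1:ℝ) ≤ m := by exact_mod_cast hb.trans hbm
  have hm0 : (0:ℝ) < m := by linarith
  have hbR : (1:ℝ) ≤ b := by exact_mod_cast hb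
  have hbmR : (b:ℝ) ≤ m := by exact_mod_cast hbm
  set x : ℝ := ((b:ℝ) - 1) / m with hxdef
  have hx0 : 0 ≤ x := by
    apply div_nonneg <;> linarith
  have hx1 : x ≤ 1 := by
    rw [hxdef, div_le_one hm0]; linarith
  have h1x : 0 < 1 - x := by
    rw [hxdef]
    have : ((b:ℝ) - 1) / m < 1 := by
      rw [div_lt_one hm0]; linarith
    linarith
  have hE : (0:ℝ) < Real.exp 1 := Real.exp_pos 1
  have key := aux_key x ⟨hx0, hx1⟩
  have hexp : Real.exp (-1 + x) = Real.exp x / Real.exp 1 := by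
    rw [Real.exp_add, Real.exp_neg, inv_mul_eq_div]
  have hden : (m:ℝ) - b + 1 = m * (1 - x) := by
    rw [hxdef]; field_simp; ring
  have hfrac : (m:ℝ) / ((m:ℝ) - b + 1) = 1 / (1 - x) := by
    rw [hden]
    field_simp
  have hx3 : ((b:ℝ) - 1) / (3 * m) = x / 3 := by
    rw [hxdef, div_div, mul_comm]
  rw [hfrac, hx3, hexp]
  rw [ge_iff_le]
  have hEx : 0 < Real.exp x := Real.exp_pos x
  have hmain : (1 - 1 / Real.exp 1) * (1 - x) ≤ (1 - x/3) * (1 - Real.exp x / Real.exp 1) := by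
    have h2 : (1 - x/3) * (1 - Real.exp x / Real.exp 1)
        = ((3 - x) * (Real.exp 1 - Real.exp x)) / (3 * Real.exp 1) := by
      field_simp
    have h3 : (1 - 1 / Real.exp 1) * (1 - x)
        = (3 * (Real.exp 1 - 1) * (1 - x)) / (3 * Real.exp 1) := by
      field_simp
    rw [h2, h3]
    gcongr ?_ / _
    nlinarith [key]
  calc 1 - 1 / Real.exp 1 = ((1 - 1/Real.exp 1) * (1-x)) / (1-x) := by
        rw [mul_div_assoc, div_self h1x.ne', mul_one]
    _ ≤ ((1 - x/3) * (1 - Real.exp x / Real.exp 1)) / (1-x) := by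
        gcongr ?_ / _
    _ = (1 - x/3) * (1/(1-x)) * (1 - Real.exp x / Real.exp 1) := by ring
end

section
/- Let m, b, c be integers with b ≥ 1, c ≥ 1, and b + c ≤ m. Then (1 - (b-1)/(3m)) · (m/(m - b - c + 1)) · (1 - (1 - 1/m)^{m - b - c + 1}) ≥ (m/(m - c)) · (1 - exp(-1 + c/m)). -/
set_option maxHeartbeats 1000000

lemma pow_quad_bound (x : ℝ) (hx : 0 ≤ x) : ∀ k : ℕ,
    1 + (k:ℝ) * x + (k:ℝ) * ((k:ℝ) - 1) / 2 * x ^ 2 ≤ (1 + x) ^ k := by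
  intro k
  induction k with
  | zero => norm_num
  | succ k ih =>
    have hkk : (0:ℝ) ≤ (k:ℝ) * ((k:ℝ) - 1) := by
      rcases Nat.eq_zero_or_pos k with h | h
      · simp [h]
      · have : (1:ℝ) ≤ (k:ℝ) := by exact_mod_cast h
        nlinarith
    have h1x : (0:ℝ) ≤ 1 + x := by linarith
    have h2 := mul_le_mul_of_nonneg_right ih h1x
    push_cast
    nlinarith [h2, pow_succ (1+x) k, mul_nonneg (mul_nonneg hkk hx) (mul_nonneg hx hx)]

lemma core (m k : ℕ) (hm : 2 ≤ m) (hk : 1 ≤ k) (D : ℝ) (hD : 2 * (m:ℝ) + 1 ≤ D) :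
    (D + k + 1) * k * (1 - 1/(m:ℝ)) ^ k ≤ D * m * (1 - (1 - 1/(m:ℝ)) ^ k) := by
  have hm1 : (2:ℝ) ≤ (m:ℝ) := by exact_mod_cast hm
  set n : ℝ := (m:ℝ) - 1 with hn
  have hn1 : (1:ℝ) ≤ n := by rw [hn]; linarith
  have hnpos : (0:ℝ) < n := by linarith
  have hmpos : (0:ℝ) < (m:ℝ) := by linarith
  have hnne : n ≠ 0 := ne_of_gt hnpos
  have hmne : (m:ℝ) ≠ 0 := ne_of_gt hmpos
  have hk1 : (1:ℝ) ≤ (k:ℝ) := by exact_mod_cast hk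
  have hq : (1 - 1/(m:ℝ)) = n / m := by rw [hn]; field_simp
  have hx : (1 + 1/n) = (m:ℝ)/n := by
    rw [hn]; rw [eq_div_iff (ne_of_gt (by linarith)), add_mul, one_div_mul_cancel (ne_of_gt (by linarith))]; ring
  have hqpos : (0:ℝ) < n / m := by positivity
  have hqk : (0:ℝ) < (n/m)^k := pow_pos hqpos k
  have hb := pow_quad_bound (1/n) (by positivity) k
  have hb' : 1 + (k:ℝ)*(1/n) + (k:ℝ)*((k:ℝ)-1)/2*(1/n)^2 ≤ ((m:ℝ)/n)^k := by
    rw [← hx]; exact hb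
  have hmul : (n/m)^k * ((m:ℝ)/n)^k = 1 := by
    rw [← mul_pow]
    have h5 : n / (m:ℝ) * ((m:ℝ)/n) = 1 := by field_simp
    rw [h5, one_pow]
  have h2 := mul_le_mul_of_nonneg_left hb' (le_of_lt hqk)
  rw [hmul] at h2
  have key1 : (n/m)^k * ((k:ℝ)*(1/n) + (k:ℝ)*((k:ℝ)-1)/2*(1/n)^2) ≤ 1 - (n/m)^k := by
    nlinarith [h2]
  have key2 : (D + (k:ℝ) + 1) * k ≤ D * m * ((k:ℝ)*(1/n) + (k:ℝ)*((k:ℝ)-1)/2*(1/n)^2) := by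
    have hmn : (m:ℝ) = n + 1 := by rw [hn]; ring
    have h3 : D * (m:ℝ) * ((k:ℝ)*(1/n) + (k:ℝ)*((k:ℝ)-1)/2*(1/n)^2)
        = D * (n+1) * ((k:ℝ)*(2*n + (k:ℝ) - 1)) / (2*n^2) := by
      rw [hmn]; field_simp; ring
    rw [h3, le_div_iff₀ (by positivity)]
    have hD' : 2*n + 3 ≤ D := by rw [hmn] at hD; linarith
    nlinarith [mul_nonneg (sub_nonneg.2 hD') (by nlinarith : (0:ℝ) ≤ ((k:ℝ)+1)*(n+1) - 2),
      mul_nonneg (by linarith : (0:ℝ) ≤ (k:ℝ) - 1) (by linarith : (0:ℝ) ≤ 5*n + 3),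
      mul_nonneg (by linarith : (0:ℝ) ≤ (k:ℝ) - 1) hnpos.le]
  have hDm : (0:ℝ) ≤ D * m := by nlinarith
  calc (D + (k:ℝ) + 1) * k * (1 - 1/(m:ℝ))^k
      = (n/m)^k * ((D + (k:ℝ) + 1) * k) := by rw [hq]; ring
    _ ≤ (n/m)^k * (D * m * ((k:ℝ)*(1/n) + (k:ℝ)*((k:ℝ)-1)/2*(1/n)^2)) :=
        mul_le_mul_of_nonneg_left key2 hqk.le
    _ = D * m * ((n/m)^k * ((k:ℝ)*(1/n) + (k:ℝ)*((k:ℝ)-1)/2*(1/n)^2)) := by ring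
    _ ≤ D * m * (1 - (n/m)^k) := mul_le_mul_of_nonneg_left key1 hDm
    _ = D * m * (1 - (1 - 1/(m:ℝ))^k) := by rw [hq]

lemma chain (m : ℕ) (hm : 2 ≤ m) : ∀ (j k K : ℕ), 1 ≤ k → k + j = K → K + 1 ≤ m →
    3*(m:ℝ)*(k:ℝ)*(1 - (1 - 1/(m:ℝ))^K) ≤ (3*(m:ℝ) - (j:ℝ))*(K:ℝ)*(1 - (1 - 1/(m:ℝ))^k) := by
  intro j
  induction j with
  | zero =>
    intro k K hk hkK hKm
    have : k = K := by omega
    subst this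
    norm_num
  | succ j ih =>
    intro k K hk hkK hKm
    have hm1 : (2:ℝ) ≤ (m:ℝ) := by exact_mod_cast hm
    have ihh := ih (k+1) K (by omega) (by omega) hKm
    push_cast at ihh
    have hKr : (K:ℝ) = (k:ℝ) + (j:ℝ) + 1 := by exact_mod_cast (congrArg (Nat.cast (R := ℝ)) hkK.symm)
    have hKm' : (K:ℝ) + 1 ≤ (m:ℝ) := by exact_mod_cast hKm
    set q : ℝ := 1 - 1/(m:ℝ) with hqdef
    have hD : 2*(m:ℝ) + 1 ≤ 3*(m:ℝ) - (K:ℝ) := by linarith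
    have hmpos : (0:ℝ) < (m:ℝ) := by linarith
    have hcore : ((3*(m:ℝ) - (K:ℝ)) + (k:ℝ) + 1) * (k:ℝ) * q ^ k
        ≤ (3*(m:ℝ) - (K:ℝ)) * (m:ℝ) * (1 - q ^ k) := by
      rw [hqdef]; exact core m k hm hk (3*(m:ℝ) - (K:ℝ)) hD
    clear_value q
    have hiden : ((3*(m:ℝ)) - ((j:ℝ)+1)) * ((k:ℝ)+1) * (1 - q^k)
        - (3*(m:ℝ) - (j:ℝ)) * (k:ℝ) * (1 - q^k * q)
        = (3*(m:ℝ) - (k:ℝ) - (j:ℝ) - 1) * (1 - q^k) - (3*(m:ℝ) - (j:ℝ)) * (k:ℝ) * q^k * (1/(m:ℝ)) := by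
      rw [hqdef]; ring
    have hdivm : ((3*(m:ℝ) - (K:ℝ)) + (k:ℝ) + 1) * (k:ℝ) * q^k * (1/(m:ℝ))
        ≤ (3*(m:ℝ) - (K:ℝ)) * (1 - q^k) := by
      rw [mul_one_div, div_le_iff₀ hmpos]
      nlinarith [hcore]
    have L : (3*(m:ℝ) - (j:ℝ)) * (k:ℝ) * (1 - q^(k+1))
        ≤ ((3*(m:ℝ)) - ((j:ℝ)+1)) * ((k:ℝ)+1) * (1 - q^k) := by
      rw [pow_succ]
      have e1 : 3*(m:ℝ) - (K:ℝ) = 3*(m:ℝ) - (k:ℝ) - (j:ℝ) - 1 := by rw [hKr]; ring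
      rw [e1] at hdivm
      nlinarith [hiden, hdivm]
    have hk0 : (0:ℝ) ≤ (k:ℝ) := Nat.cast_nonneg k
    have hK0 : (0:ℝ) ≤ (K:ℝ) := Nat.cast_nonneg K
    have h6 := mul_le_mul_of_nonneg_right ihh hk0
    have h7 := mul_le_mul_of_nonneg_right L hK0
    have h8 : 3*(m:ℝ)*(k:ℝ)*(1 - q^K) * ((k:ℝ)+1)
        ≤ (3*(m:ℝ) - ((j:ℝ)+1))*(K:ℝ)*(1 - q^k) * ((k:ℝ)+1) := by nlinarith [h6, h7]
    have h9 := le_of_mul_le_mul_right h8 (by positivity : (0:ℝ) < (k:ℝ)+1)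
    push_cast
    linarith [h9]

theorem stmt_11 (m b c : ℕ) (hb : 1 ≤ b) (hc : 1 ≤ c) (hbc : b + c ≤ m) :
    (1 - ((b : ℝ) - 1) / (3 * m)) * ((m : ℝ) / ((m : ℝ) - b - c + 1))
        * (1 - (1 - 1 / (m : ℝ)) ^ (m - b - c + 1))
      ≥ ((m : ℝ) / ((m : ℝ) - c)) * (1 - Real.exp (-1 + (c : ℝ) / m)) := by
  have hm : 2 ≤ m := by omega
  have hm1 : (2:ℝ) ≤ (m:ℝ) := by exact_mod_cast hm
  have hmpos : (0:ℝ) < (m:ℝ) := by linarith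
  set K := m - c with hKdef
  set e := m - b - c + 1 with hedef
  have hkey : e + (b-1) = K := by omega
  have he1 : 1 ≤ e := by omega
  have hK1 : 1 ≤ K := by omega
  have hKm : K + 1 ≤ m := by omega
  have hcastK : ((K:ℕ):ℝ) = (m:ℝ) - c := by
    rw [hKdef]; push_cast [Nat.cast_sub (by omega : c ≤ m)]; ring
  have hcaste : ((e:ℕ):ℝ) = (m:ℝ) - b - c + 1 := by
    rw [hedef]
    have h0 : m - b - c = m - (b + c) := by omega
    rw [h0]
    push_cast [Nat.cast_sub hbc]; ring
  have hcasta : (((b-1:ℕ)):ℝ) = (b:ℝ) - 1 := by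
    push_cast [Nat.cast_sub hb]; ring
  set q : ℝ := 1 - 1/(m:ℝ) with hqdef
  have hq0 : (0:ℝ) ≤ q := by
    rw [hqdef]
    have : 1/(m:ℝ) ≤ 1 := by rw [div_le_one hmpos]; linarith
    linarith
  have hexpeq : Real.exp (-1 + (c:ℝ)/m) = Real.exp (-(1/(m:ℝ))) ^ K := by
    rw [← Real.exp_nat_mul]
    congr 1
    rw [hcastK]
    field_simp
    ring
  have hA : q ^ K ≤ Real.exp (-1 + (c:ℝ)/m) := by
    rw [hexpeq]
    apply pow_le_pow_left₀ hq0
    have := Real.add_one_le_exp (-(1/(m:ℝ)))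
    rw [hqdef]; linarith
  have hKpos : (0:ℝ) < (K:ℝ) := by exact_mod_cast hK1
  have hepos : (0:ℝ) < (e:ℝ) := by exact_mod_cast he1
  have hrhs : ((m:ℝ) / ((m:ℝ) - c)) * (1 - Real.exp (-1 + (c:ℝ)/m))
      ≤ ((m:ℝ) / (K:ℝ)) * (1 - q^K) := by
    rw [← hcastK] at *
    apply mul_le_mul_of_nonneg_left _ (by positivity)
    linarith [hA]
  have hch := chain m hm (b-1) e K he1 hkey hKm
  have hid : (1 - ((b:ℝ) - 1) / (3 * m)) * ((m:ℝ) / (e:ℝ)) * (1 - q^e)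
      - ((m:ℝ) / (K:ℝ)) * (1 - q^K)
      = ((3*(m:ℝ) - ((b:ℝ)-1)) * (K:ℝ) * (1 - q^e) - 3*(m:ℝ)*(e:ℝ)*(1 - q^K)) / (3*(e:ℝ)*(K:ℝ)) := by
    field_simp
  have hchain' : 3*(m:ℝ)*(e:ℝ)*(1 - q^K) ≤ (3*(m:ℝ) - ((b:ℝ)-1))*(K:ℝ)*(1 - q^e) := by
    rw [← hcasta]; exact hch
  have hmain : ((m:ℝ) / (K:ℝ)) * (1 - q^K)
      ≤ (1 - ((b:ℝ) - 1) / (3 * m)) * ((m:ℝ) / (e:ℝ)) * (1 - q^e) := by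
    have h0 : (0:ℝ) ≤ ((3*(m:ℝ) - ((b:ℝ)-1)) * (K:ℝ) * (1 - q^e) - 3*(m:ℝ)*(e:ℝ)*(1 - q^K)) / (3*(e:ℝ)*(K:ℝ)) := by
      apply div_nonneg _ (by positivity)
      linarith [hchain']
    linarith [hid, h0]
  rw [ge_iff_le]
  calc ((m:ℝ) / ((m:ℝ) - c)) * (1 - Real.exp (-1 + (c:ℝ)/m))
      ≤ ((m:ℝ) / (K:ℝ)) * (1 - q^K) := hrhs
    _ ≤ (1 - ((b:ℝ) - 1) / (3 * m)) * ((m:ℝ) / (e:ℝ)) * (1 - q^e) := hmain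
    _ = (1 - ((b:ℝ) - 1) / (3 * m)) * ((m:ℝ) / ((m:ℝ) - (b:ℝ) - (c:ℝ) + 1)) * (1 - q^e) := by
        rw [hcaste]
end

section
/- Let n ≥ 1 and b₁, ..., b_n be positive integers with ∑_{i=1}^n b_i = m, and let b_max = max_i b_i. Then ∏_{i=1}^n (1 - b_i/m) ≥ (1 - b_max/m)^{⌊m/b_max⌋} · ⌊m/b_max⌋ · (b_max/m). -/
lemma aux_capped_weierstrass {ι : Type*} (x : ℝ) (hx0 : 0 < x) (hx1 : x ≤ 1)
    (s : Finset ι) (f : ι → ℝ) (hf : ∀ i ∈ s, 0 ≤ f i ∧ f i ≤ x) :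
    (1 - x) ^ (⌊(∑ i ∈ s, f i) / x⌋₊)
      * (1 - ((∑ i ∈ s, f i) - (⌊(∑ i ∈ s, f i) / x⌋₊ : ℝ) * x))
      ≤ ∏ i ∈ s, (1 - f i) := by
  induction s using Finset.cons_induction with
  | empty => simp
  | cons i s hi ih =>
    have hfi := hf i (Finset.mem_cons_self i s)
    have hf' : ∀ j ∈ s, 0 ≤ f j ∧ f j ≤ x := fun j hj => hf j (Finset.mem_cons_of_mem hj)
    have ih' := ih hf'
    set a := f i with ha
    set σ := ∑ j ∈ s, f j with hσ
    have hσ0 : 0 ≤ σ := Finset.sum_nonneg fun j hj => (hf' j hj).1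
    set j := ⌊σ / x⌋₊ with hj
    have hjle : (j : ℝ) * x ≤ σ := by
      have := Nat.floor_le (div_nonneg hσ0 hx0.le)
      calc (j : ℝ) * x ≤ (σ / x) * x := by nlinarith
        _ = σ := by field_simp
    have hjlt : σ < ((j : ℝ) + 1) * x := by
      have := Nat.lt_floor_add_one (σ / x)
      calc σ = (σ / x) * x := by field_simp
        _ < ((j : ℝ) + 1) * x := by nlinarith
    have hpow : (0:ℝ) ≤ (1 - x) ^ j := pow_nonneg (by linarith) j
    have hsum : ∑ k ∈ Finset.cons i s hi, f k = a + σ := Finset.sum_cons hi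
    have hprod : ∏ k ∈ Finset.cons i s hi, (1 - f k) = (1 - a) * ∏ k ∈ s, (1 - f k) :=
      Finset.prod_cons hi
    have ha1 : 1 - a ≥ 0 := by linarith [hfi.2]
    have hstep : (1 - a) * ((1 - x) ^ j * (1 - (σ - (j : ℝ) * x)))
        ≤ (1 - a) * ∏ k ∈ s, (1 - f k) := by
      exact mul_le_mul_of_nonneg_left ih' ha1
    rw [hsum, hprod]
    by_cases hcase : a + (σ - (j : ℝ) * x) < x
    · have hfloor : ⌊(a + σ) / x⌋₊ = j := by
        rw [Nat.floor_eq_iff (div_nonneg (by linarith [hfi.1]) hx0.le)]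
        constructor
        · rw [le_div_iff₀ hx0]; nlinarith [hfi.1]
        · rw [div_lt_iff₀ hx0]; push_cast; nlinarith
      rw [hfloor]
      refine le_trans ?_ hstep
      have key : (1 - (a + σ - (j : ℝ) * x)) ≤ (1 - a) * (1 - (σ - (j : ℝ) * x)) := by
        nlinarith [hfi.1, mul_nonneg hfi.1 (by linarith : (0:ℝ) ≤ σ - (j:ℝ)*x)]
      nlinarith [mul_le_mul_of_nonneg_left key hpow]
    · push_neg at hcase
      have hfloor : ⌊(a + σ) / x⌋₊ = j + 1 := by
        rw [Nat.floor_eq_iff (div_nonneg (by linarith [hfi.1]) hx0.le)]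
        constructor
        · rw [le_div_iff₀ hx0]; push_cast; nlinarith
        · rw [div_lt_iff₀ hx0]; push_cast; nlinarith [hfi.2]
      rw [hfloor]
      refine le_trans ?_ hstep
      have key : (1 - x) * (1 - (a + σ - ((j : ℝ) + 1) * x)) ≤ (1 - a) * (1 - (σ - (j : ℝ) * x)) := by
        nlinarith [mul_nonneg (by linarith [hfi.2] : (0:ℝ) ≤ x - a) (by linarith : (0:ℝ) ≤ x - (σ - (j:ℝ)*x))]
      have := mul_le_mul_of_nonneg_left key hpow
      calc (1 - x) ^ (j + 1) * (1 - (a + σ - ((j:ℕ) + 1 : ℕ) * x))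
          = (1 - x) ^ j * ((1 - x) * (1 - (a + σ - ((j : ℝ) + 1) * x))) := by
            push_cast; ring
        _ ≤ (1 - x) ^ j * ((1 - a) * (1 - (σ - (j : ℝ) * x))) := this
        _ = (1 - a) * ((1 - x) ^ j * (1 - (σ - (j : ℝ) * x))) := by ring

theorem stmt_14 (n : ℕ) (hn : 1 ≤ n) (b : Fin n → ℕ) (hb : ∀ i, 1 ≤ b i)
    (m : ℕ) (hm : m = ∑ i, b i)
    (bmax : ℕ) (hbmax : ∀ i, b i ≤ bmax) (hbmem : ∃ i, b i = bmax) :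
    ∏ i, (1 - (b i : ℝ) / m)
      ≥ (1 - (bmax : ℝ) / m) ^ (⌊(m : ℝ) / (bmax : ℝ)⌋₊)
          * (⌊(m : ℝ) / (bmax : ℝ)⌋₊ : ℝ) * ((bmax : ℝ) / m) := by
  obtain ⟨i₀, hi₀⟩ := hbmem
  have hmpos : 0 < m := by
    rw [hm]
    exact Finset.sum_pos (fun i _ => hb i) ⟨i₀, Finset.mem_univ i₀⟩
  have hbmaxpos : 0 < bmax := lt_of_lt_of_le (hb i₀) (le_of_eq hi₀)
  have hbmaxm : bmax ≤ m := by
    rw [hm, ← hi₀]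
    exact Finset.single_le_sum (fun i _ => Nat.zero_le (b i)) (Finset.mem_univ i₀)
  have hmR : (0:ℝ) < m := by exact_mod_cast hmpos
  have hbR : (0:ℝ) < bmax := by exact_mod_cast hbmaxpos
  set x : ℝ := (bmax : ℝ) / m with hx
  have hx0 : 0 < x := by positivity
  have hx1 : x ≤ 1 := by
    rw [hx, div_le_one hmR]; exact_mod_cast hbmaxm
  have hσ : ∑ i, (b i : ℝ) / m = 1 := by
    rw [← Finset.sum_div]
    have : ∑ i, (b i : ℝ) = (m : ℝ) := by
      rw [hm]; push_cast; ring
    rw [this]; field_simp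
  have key := aux_capped_weierstrass x hx0 hx1 Finset.univ (fun i => (b i : ℝ) / m)
    (fun i _ => ⟨by positivity, by
      rw [hx, div_le_div_iff_of_pos_right hmR]
      · exact_mod_cast hbmax i⟩)
  rw [hσ] at key
  have hfloor : ⌊(1:ℝ) / x⌋₊ = ⌊(m : ℝ) / (bmax : ℝ)⌋₊ := by
    rw [hx, one_div_div]
  rw [hfloor] at key
  set K := ⌊(m : ℝ) / (bmax : ℝ)⌋₊ with hK
  have hKx : (1 : ℝ) - ((K : ℝ) * x) = 1 - (K:ℝ) * x := rfl
  calc (1 - x) ^ K * (K : ℝ) * x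
      = (1 - x) ^ K * (1 - (1 - (K : ℝ) * x)) := by ring
    _ ≤ ∏ i, (1 - (b i : ℝ) / m) := key
end

section
/- Let n ≥ 1 and b₁, ..., b_n be positive integers with ∑_{i=1}^n b_i = m, and let b_max = max_i b_i. Then ∏_{i=1}^n (1 - b_i/m) ≥ (1 - b_max/m)^{m/b_max}, where the right-hand side is the real power of the nonnegative base 1 - b_max/m with real exponent m/b_max. -/
theorem stmt_15 (n : ℕ) (hn : 1 ≤ n) (b : Fin n → ℕ) (hb : ∀ i, 1 ≤ b i)
    (m : ℕ) (hm : m = ∑ i, b i)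
    (bmax : ℕ) (hbmax : ∀ i, b i ≤ bmax) (hbmem : ∃ i, b i = bmax) :
    ∏ i, (1 - (b i : ℝ) / m)
      ≥ (1 - (bmax : ℝ) / m) ^ ((m : ℝ) / (bmax : ℝ)) := by
  obtain ⟨i0, hi0⟩ := hbmem
  have hbmax0 : 0 < bmax := hi0 ▸ hb i0
  have hbmaxle : bmax ≤ m := by
    rw [hm, ← hi0]
    exact Finset.single_le_sum (fun i _ => Nat.zero_le _) (Finset.mem_univ i0)
  have hm0 : 0 < m := lt_of_lt_of_le hbmax0 hbmaxle
  have hmR : (0:ℝ) < m := by exact_mod_cast hm0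
  have hbR : (0:ℝ) < bmax := by exact_mod_cast hbmax0
  have hbase : (0:ℝ) ≤ 1 - (bmax : ℝ) / m := by
    have : (bmax : ℝ) / m ≤ 1 := by
      rw [div_le_one hmR]; exact_mod_cast hbmaxle
    linarith
  have hsum : (m : ℝ) / bmax = ∑ i, (b i : ℝ) / bmax := by
    rw [← Finset.sum_div, hm]
    push_cast
    ring
  rw [hsum, Real.rpow_sum_of_nonneg hbase (fun i _ => by positivity)]
  apply Finset.prod_le_prod (fun i _ => Real.rpow_nonneg hbase _)
  intro i _
  have hBern := rpow_one_add_le_one_add_mul_self (s := -((bmax : ℝ) / m))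
    (p := (b i : ℝ) / bmax) (by linarith) (by positivity)
    (by rw [div_le_one hbR]; exact_mod_cast hbmax i)
  calc (1 + -((bmax:ℝ)/m)) ^ ((b i : ℝ)/bmax)
      ≤ 1 + (b i : ℝ)/bmax * -((bmax:ℝ)/m) := hBern
    _ = 1 - (b i : ℝ)/m := by field_simp; ring
end

section
/- For every real y with 0 < y ≤ 1, it holds that (1 - y)^{1/y} ≥ (1 - y)·(2 + y)/(2e), where (1 - y)^{1/y} is the real power of the nonnegative base 1 - y with real exponent 1/y, and e is Euler's number. -/
/-- Core estimate: for `0 < x ≤ 1`, `x/2 - 1/(2x) ≤ log x`. -/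
lemma log_lower_aux (x : ℝ) (hx0 : 0 < x) (hx1 : x ≤ 1) :
    x / 2 - 1 / (2 * x) ≤ Real.log x := by
  rw [Real.le_log_iff_exp_le hx0]
  set w : ℝ := 1 / (2 * x) - x / 2 with hw
  have hwnn : 0 ≤ w := by
    rw [hw, sub_nonneg, div_le_div_iff₀ (by norm_num) (by positivity)]
    nlinarith
  have hq : 1 + w + w ^ 2 / 2 ≤ Real.exp w := Real.quadratic_le_exp_of_nonneg hwnn
  have hkey : 1 / x ≤ Real.exp w := by
    refine le_trans ?_ hq
    have hw' : w = (1 - x ^ 2) / (2 * x) := by rw [hw]; field_simp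
    rw [div_le_iff₀ hx0]
    have expand : (1 + w + w ^ 2 / 2) * x = 1 + (1 - x) ^ 4 / (8 * x) := by
      rw [hw']; field_simp; ring
    rw [expand]
    have : 0 ≤ (1 - x) ^ 4 / (8 * x) := by positivity
    linarith
  have : Real.exp (x / 2 - 1 / (2 * x)) = (Real.exp w)⁻¹ := by
    rw [← Real.exp_neg]; congr 1; rw [hw]; ring
  rw [this]
  rw [inv_le_comm₀ (Real.exp_pos w) hx0] at *
  calc x⁻¹ = 1 / x := (one_div x).symm
    _ ≤ Real.exp w := hkey

theorem stmt_17 (y : ℝ) (hy0 : 0 < y) (hy1 : y ≤ 1) :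
    (1 - y) ^ (1 / y) ≥ (1 - y) * (2 + y) / (2 * Real.exp 1) := by
  rcases eq_or_lt_of_le hy1 with rfl | hy1'
  · simp
  -- now y < 1
  have hx0 : (0:ℝ) < 1 - y := by linarith
  have h2y : (0:ℝ) < 2 + y := by linarith
  have he : (0:ℝ) < Real.exp 1 := Real.exp_pos 1
  -- log estimates
  have hcore : (1 - y) / 2 - 1 / (2 * (1 - y)) ≤ Real.log (1 - y) :=
    log_lower_aux (1 - y) hx0 (by linarith)
  have hlog2 : Real.log (1 + y / 2) ≤ y / 2 := by
    have := Real.log_le_sub_one_of_pos (x := 1 + y / 2) (by linarith)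
    linarith
  -- key log inequality
  have hmul : ((1 - y) / y) * Real.log (1 - y) ≥ y / 2 - 1 := by
    have h1 : ((1 - y) / y) * ((1 - y) / 2 - 1 / (2 * (1 - y))) = y / 2 - 1 := by
      field_simp
      ring
    calc ((1 - y) / y) * Real.log (1 - y)
        ≥ ((1 - y) / y) * ((1 - y) / 2 - 1 / (2 * (1 - y))) := by
          apply mul_le_mul_of_nonneg_left hcore (by positivity)
      _ = y / 2 - 1 := h1
  have hkey : Real.log (1 - y) + Real.log (1 + y / 2) - 1 ≤ Real.log (1 - y) * (1 / y) := by
    have : Real.log (1 - y) * (1 / y) - Real.log (1 - y) = ((1 - y) / y) * Real.log (1 - y) := by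
      field_simp
    nlinarith [hmul, hlog2]
  -- convert to exp form
  have hLHS : (1 - y) ^ (1 / y) = Real.exp (Real.log (1 - y) * (1 / y)) :=
    Real.rpow_def_of_pos hx0 (1 / y)
  have hRHS : (1 - y) * (2 + y) / (2 * Real.exp 1)
      = Real.exp (Real.log (1 - y) + Real.log (1 + y / 2) - 1) := by
    rw [Real.exp_sub, Real.exp_add, Real.exp_log hx0, Real.exp_log (by linarith : (0:ℝ) < 1 + y/2)]
    field_simp
  rw [hLHS, hRHS, ge_iff_le, Real.exp_le_exp]
  exact hkey
end

section
/- Let n ≥ 1 and b₁, ..., b_n be positive integers with ∑_{i=1}^n b_i = m and b_n ≥ b_i for all i ∈ {1,...,n}. For each i ∈ {1,...,n} define p_i = m / (2m - b_n - ∑_{j=1}^{i-1} b_j). Then for every i ∈ {1,...,n}, the denominator 2m - b_n - ∑_{j=1}^{i-1} b_j is positive and p_i · ∏_{j=1}^{i-1} (1 - p_j·b_j/m) = m/(2m - b_n). -/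
theorem stmt_18 (n : ℕ) (b : Fin (n + 1) → ℕ) (hb : ∀ i, 1 ≤ b i)
    (hmax : ∀ i, b i ≤ b (Fin.last n))
    (m : ℕ) (hm : m = ∑ i, b i)
    (p : Fin (n + 1) → ℝ)
    (hp : ∀ i, p i = (m : ℝ) /
        (2 * m - (b (Fin.last n) : ℝ) - ∑ j ∈ Finset.Iio i, (b j : ℝ))) :
    ∀ i : Fin (n + 1),
      0 < 2 * (m : ℝ) - (b (Fin.last n) : ℝ) - ∑ j ∈ Finset.Iio i, (b j : ℝ) ∧
      p i * ∏ j ∈ Finset.Iio i, (1 - p j * (b j : ℝ) / m)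
        = (m : ℝ) / (2 * m - (b (Fin.last n) : ℝ)) := by
  set L := Fin.last n with hL
  have hmpos : 0 < m := by
    rw [hm]
    exact Finset.sum_pos (fun i _ => hb i) ⟨L, Finset.mem_univ _⟩
  have hIio0 : Finset.Iio (0 : Fin (n+1)) = ∅ := by
    ext j; simp [Finset.mem_Iio]
  have hSle : ∀ i : Fin (n+1), (∑ j ∈ Finset.Iio i, b j) + b L ≤ m := by
    intro i
    have hnot : L ∉ Finset.Iio i := by
      simp only [Finset.mem_Iio, not_lt]
      exact Fin.le_last i
    have : ∑ j ∈ insert L (Finset.Iio i), b j ≤ ∑ j, b j :=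
      Finset.sum_le_sum_of_subset (Finset.subset_univ _)
    rw [Finset.sum_insert hnot] at this
    omega
  have hDpos : ∀ i : Fin (n+1), (0:ℝ) < 2 * m - (b L : ℝ) - ∑ j ∈ Finset.Iio i, (b j : ℝ) := by
    intro i
    have h := hSle i
    have h2 : ((∑ j ∈ Finset.Iio i, b j : ℕ) : ℝ) + (b L : ℝ) ≤ (m : ℝ) := by
      exact_mod_cast h
    have h3 : (0:ℝ) < m := by exact_mod_cast hmpos
    push_cast at h2
    linarith
  have key : ∀ i : Fin (n+1),
      (∏ j ∈ Finset.Iio i, (1 - p j * (b j : ℝ) / m)) * (2 * m - (b L : ℝ))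
        = 2 * m - (b L : ℝ) - ∑ j ∈ Finset.Iio i, (b j : ℝ) := by
    intro i
    induction i using Fin.induction with
    | zero => rw [hIio0]; simp
    | succ k ih =>
        have hins : Finset.Iio (k.succ) = insert k.castSucc (Finset.Iio k.castSucc) := by
          ext j
          simp only [Finset.mem_Iio, Finset.mem_insert, Fin.lt_def, Fin.ext_iff,
            Fin.val_succ, Fin.coe_castSucc]
          omega
        have hnot : k.castSucc ∉ Finset.Iio k.castSucc := by
          simp only [Finset.mem_Iio]; exact lt_irrefl _
        rw [hins, Finset.prod_insert hnot, Finset.sum_insert hnot]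
        have hDk := hDpos k.castSucc
        have hpk := hp k.castSucc
        have hm0 : (m:ℝ) ≠ 0 := by positivity
        set S := ∑ j ∈ Finset.Iio k.castSucc, (b j : ℝ) with hS
        have hfrac : (1 - p k.castSucc * (b k.castSucc : ℝ) / m)
            = (2 * m - (b L : ℝ) - S - (b k.castSucc : ℝ)) / (2 * m - (b L : ℝ) - S) := by
          rw [hpk]
          rw [div_mul_eq_mul_div, div_div, mul_comm (2 * (m:ℝ) - (b L : ℝ) - S) (m:ℝ), ← div_div,
            mul_div_cancel_left₀ _ hm0, sub_div, div_self hDk.ne']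
        rw [hfrac, mul_assoc, ih, div_mul_cancel₀ _ hDk.ne']
        ring
  intro i
  refine ⟨hDpos i, ?_⟩
  have hD0 : (0:ℝ) < 2 * m - (b L : ℝ) := by
    have := hDpos 0
    rw [hIio0] at this
    simpa using this
  rw [hp i, div_mul_eq_mul_div, div_eq_div_iff (hDpos i).ne' hD0.ne', mul_assoc, key i]
end
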